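/- arXiv:2203.13578 — 2 statements merged into one kernel-verified Lean document; each statement's English description precedes it below -/
import Mathlib

section
/- (Type I multiple discrete orthogonality) Assume B_{N+1} has N+1 simple real zeros λ_1 > ⋯ > λ_{N+1}. Then for every m with 1 ≤ m ≤ N and every n ∈ {0, 1, …, m−1}: Σ_{i=1}^{N+1} (Σ_{a=1}^{p} A^{(a)}_m(λ_i)·μ_{i,a})·λ_i^n = 0. -/
/-!
Write `Q n` for `Qp p A n N`. Expanding the determinant along its first row makes `Q` a fixed
combination of the `A a`, so `Q` satisfies the type I recursion, and `Q (N + r) = 0` for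
`0 < r < p` (two equal rows). Summation by parts against the type II recursion then gives the
Christoffel–Darboux identity
  `(x - y) ∑_{l ≤ N} Q_l(x) B_l(y) = T_{N+p,N} Q_{N+p}(x) B_N(y) - Q_N(x) B_{N+1}(y)`.
At a zero `λ_k` of `B_{N+1}` the coefficient `T_{N+p,N} Q_{N+p}(λ_k)` vanishes: otherwise
`B_N(λ_k) = 0` too, and the confluent form of the identity kills the denominator of `w_{k,·}`.
So `(Q_l(λ_k))_l` and `(B_l(λ_j))_l` are biorthogonal, the matrix `(w_{k,l})` inverts
`(B_l(λ_k))`, and `∑_k w_{k,m} B_l(λ_k) = δ_{lm}`. As `x^n` is a combination of `B_0, …, B_n`,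
this is the claim once `∑_a A^{(a)}_m(λ_k) μ_{k,a} = w_{k,m}`, which holds because `ν` maps the
first-row cofactors of `Q` to `(Q_0, …, Q_{p-1})`.
-/

open Polynomial

noncomputable def Qp (p : ℕ) (A : Fin p → ℕ → Polynomial ℝ) (n N : ℕ) : Polynomial ℝ :=
  Matrix.det (Matrix.of fun i a : Fin p =>
    if (i : ℕ) = 0 then A a n else A a (N + (i : ℕ)))

noncomputable def nuMat (p : ℕ) (A : Fin p → ℕ → Polynomial ℝ) : Matrix (Fin p) (Fin p) ℝ :=
  Matrix.of fun j a : Fin p => (A a (j : ℕ)).coeff 0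

noncomputable def wfun (p : ℕ) (A : Fin p → ℕ → Polynomial ℝ) (B : ℕ → Polynomial ℝ)
    (N : ℕ) (lam : Fin (N + 1) → ℝ) (k : Fin (N + 1)) (n : ℕ) : ℝ :=
  Polynomial.eval (lam k) (Qp p A n N) /
    ∑ l ∈ Finset.range (N + 1),
      Polynomial.eval (lam k) (Qp p A l N) * Polynomial.eval (lam k) (B l)

noncomputable def mu (p : ℕ) (A : Fin p → ℕ → Polynomial ℝ) (B : ℕ → Polynomial ℝ)
    (N : ℕ) (lam : Fin (N + 1) → ℝ) (k : Fin (N + 1)) (a : Fin p) : ℝ :=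
  ∑ b : Fin p, (nuMat p A)⁻¹ a b * wfun p A B N lam k (b : ℕ)

open Finset Matrix

theorem sum_band_eq {M : Type*} [AddCommMonoid M] (g : ℕ → ℕ → M) (N p : ℕ) :
    ∑ l ∈ range (N + 1), ∑ i ∈ range (p + 1), g (l + i) l
      = ∑ r ∈ range (N + 1), ∑ j ∈ range (p + 1), (if j ≤ r then g r (r - j) else 0)
        + ∑ l ∈ range (N + 1), ∑ i ∈ range (p + 1),
            (if N < l + i then g (l + i) l else 0) := by
  have hsplit : ∀ l i, g (l + i) l
      = (if l + i ≤ N then g (l + i) l else 0) + (if N < l + i then g (l + i) l else 0) := by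
    intro l i
    by_cases h : l + i ≤ N
    · simp [h, not_lt.mpr h]
    · simp [h, not_le.mp h]
  rw [sum_congr rfl fun l _ => sum_congr rfl fun i _ => hsplit l i]
  simp only [sum_add_distrib]
  congr 1
  rw [← sum_product' (f := fun l i => if l + i ≤ N then g (l + i) l else 0),
    ← sum_product' (f := fun r j => if j ≤ r then g r (r - j) else 0),
    ← sum_filter, ← sum_filter]
  refine sum_nbij' (fun x => (x.1 + x.2, x.2)) (fun y => (y.1 - y.2, y.2)) ?_ ?_ ?_ ?_ ?_
  all_goals rintro ⟨l, i⟩ h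
  all_goals simp only [mem_filter, mem_product, mem_range] at h ⊢
  · omega
  · omega
  · simp
  · simp only [Prod.mk.injEq, and_true]; omega
  · simp

section BandedRecurrence

variable {R : Type*} [CommRing R] (p : ℕ) (t : ℕ → ℕ → R)

/- Formal left and right eigenvectors, with eigenvalues `x` and `y`, of the lower Hessenberg
matrix with entries `t r s` on the band `s ≤ r ≤ s + p` and ones on the superdiagonal. -/
def IsTypeISolution (x : R) (q : ℕ → R) : Prop :=
  ∀ n, (if n = 0 then 0 else q (n - 1)) + ∑ i ∈ range (p + 1), t (n + i) n * q (n + i)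
    = x * q n

def IsTypeIISolution (y : R) (b : ℕ → R) : Prop :=
  ∀ n, b (n + 1) + ∑ j ∈ range (p + 1), (if j ≤ n then t n (n - j) * b (n - j) else 0)
    = y * b n

variable {p t}

theorem christoffel_darboux {x y : R} {q b : ℕ → R} (hq : IsTypeISolution p t x q)
    (hb : IsTypeIISolution p t y b) (N : ℕ) :
    (x - y) * ∑ l ∈ range (N + 1), q l * b l
      = ∑ l ∈ range (N + 1), ∑ i ∈ range (p + 1),
          (if N < l + i then t (l + i) l * q (l + i) * b l else 0) - q N * b (N + 1) := by
  set g : ℕ → ℕ → R := fun r s => t r s * q r * b s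
  set f : ℕ → R := fun l => if l = 0 then 0 else q (l - 1) * b l
  have htelescope : ∑ l ∈ range (N + 1), (f l - f (l + 1)) = - (q N * b (N + 1)) := by
    rw [sum_range_sub']
    simp [f]
  calc (x - y) * ∑ l ∈ range (N + 1), q l * b l
      = ∑ l ∈ range (N + 1), ((f l - f (l + 1)) + (∑ i ∈ range (p + 1), g (l + i) l
          - ∑ j ∈ range (p + 1), (if j ≤ l then g l (l - j) else 0))) := by
        rw [mul_sum]
        refine sum_congr rfl fun l _ => ?_
        have hqb : f l + ∑ i ∈ range (p + 1), g (l + i) l = x * q l * b l := by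
          rw [← hq l, add_mul, sum_mul, ite_mul, zero_mul]
        have hbq : q l * b (l + 1) + ∑ j ∈ range (p + 1), (if j ≤ l then g l (l - j) else 0)
            = q l * (y * b l) := by
          rw [← hb l, mul_add, mul_sum]
          congr 1
          refine sum_congr rfl fun j _ => ?_
          split_ifs <;> ring
        have hf : f (l + 1) = q l * b (l + 1) := by simp [f]
        rw [hf]
        linear_combination hbq - hqb
    _ = _ := by
        rw [sum_add_distrib, htelescope, sum_sub_distrib, sum_band_eq g]
        ring

theorem christoffel_darboux_of_gap {x y : R} {q b : ℕ → R} (hq : IsTypeISolution p t x q)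
    (hb : IsTypeIISolution p t y b) {N : ℕ} (hp : 0 < p)
    (hgap : ∀ r, N < r → r < N + p → q r = 0) :
    (x - y) * ∑ l ∈ range (N + 1), q l * b l
      = t (N + p) N * q (N + p) * b N - q N * b (N + 1) := by
  rw [christoffel_darboux hq hb N, ← sum_product' (f := fun l i =>
    if N < l + i then t (l + i) l * q (l + i) * b l else 0),
    sum_eq_single_of_mem (N, p) (by simp) ?_, if_pos (by omega)]
  rintro ⟨l, i⟩ hli hne
  simp only [mem_product, mem_range, ne_eq, Prod.mk.injEq] at hli hne
  split_ifs with h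
  · rw [hgap (l + i) h (by omega), mul_zero, zero_mul]
  · rfl

theorem IsTypeISolution.map {S : Type*} [CommRing S] (f : R →+* S) {t' : ℕ → ℕ → S}
    (ht : ∀ r s, f (t r s) = t' r s) {x : R} {q : ℕ → R} (hq : IsTypeISolution p t x q) :
    IsTypeISolution p t' (f x) (f ∘ q) := by
  intro n
  simpa [apply_ite f, ht] using congrArg f (hq n)

theorem IsTypeISolution.sum_mul {ι : Type*} [Fintype ι] {x : R} {q : ι → ℕ → R}
    (hq : ∀ a, IsTypeISolution p t x (q a)) (c : ι → R) :
    IsTypeISolution p t x (fun n => ∑ a, q a n * c a) := by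
  intro n
  simp only [mul_sum, ← mul_assoc, ← hq _ n, add_mul, sum_add_distrib]
  congr 1
  · split_ifs <;> simp
  · simp only [Finset.sum_mul]
    exact sum_comm

end BandedRecurrence

section Polynomials

variable {K : Type*} [CommRing K] {p : ℕ} {T : ℕ → ℕ → K}

theorem isTypeIISolution_of_rec {B : ℕ → K[X]}
    (hBrec : ∀ n, B (n + 1) = (X - C (T n n)) * B n
      - ∑ j ∈ Icc 1 p, (if j ≤ n then C (T n (n - j)) * B (n - j) else 0)) :
    IsTypeIISolution p (fun r s => C (T r s)) X B := by
  intro n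
  rw [range_eq_Ico, Ico_add_one_right_eq_Icc, ← add_sum_Ioc_eq_sum_Icc (Nat.zero_le p),
    ← Icc_add_one_left_eq_Ioc, hBrec n]
  simp only [zero_add, zero_le, if_true, Nat.sub_zero]
  ring

theorem X_pow_mem_span_image {B : ℕ → K[X]} (hB0 : B 0 = 1)
    (hB : IsTypeIISolution p (fun r s => C (T r s)) X B) (n : ℕ) :
    X ^ n ∈ Submodule.span K (B '' Set.Iic n) := by
  induction n with
  | zero => exact Submodule.subset_span ⟨0, le_refl 0, by rw [hB0, pow_zero]⟩
  | succ n ih =>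
    have hX : Submodule.span K (B '' Set.Iic n)
        ≤ (Submodule.span K (B '' Set.Iic (n + 1))).comap (LinearMap.mulLeft K X) := by
      rw [Submodule.span_le]
      rintro _ ⟨l, hl, rfl⟩
      have hmem : ∀ k ≤ n + 1, B k ∈ Submodule.span K (B '' Set.Iic (n + 1)) :=
        fun k hk => Submodule.subset_span ⟨k, hk, rfl⟩
      simp only [Set.mem_Iic] at hl
      simp only [SetLike.mem_coe, Submodule.mem_comap, LinearMap.mulLeft_apply, ← hB l]
      refine Submodule.add_mem _ (hmem _ (by omega)) (Submodule.sum_mem _ fun j _ => ?_)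
      split_ifs
      · rw [C_mul']
        exact Submodule.smul_mem _ _ (hmem _ (by omega))
      · exact Submodule.zero_mem _
    rw [pow_succ']
    exact hX ih

theorem sum_mul_pow_eq_zero_of_orthogonal {ι : Type*} [Fintype ι] {B : ℕ → K[X]}
    (hB0 : B 0 = 1) (hB : IsTypeIISolution p (fun r s => C (T r s)) X B) (w z : ι → K) {m : ℕ}
    (horth : ∀ l < m, ∑ i, w i * eval (z i) (B l) = 0) {n : ℕ} (hn : n < m) :
    ∑ i, w i * z i ^ n = 0 := by
  let L : K[X] →ₗ[K] K := ∑ i, w i • leval (z i)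
  have hL : Submodule.span K (B '' Set.Iic n) ≤ LinearMap.ker L := by
    rw [Submodule.span_le]
    rintro _ ⟨l, hl, rfl⟩
    simpa [L] using horth l (lt_of_le_of_lt hl hn)
  simpa [L] using hL (X_pow_mem_span_image hB0 hB n)

theorem christoffel_darboux_eval_left {Q B : ℕ → K[X]} {N : ℕ} (hp : 0 < p)
    (hQ : IsTypeISolution p (fun r s => C (T r s)) X Q)
    (hB : IsTypeIISolution p (fun r s => C (T r s)) X B)
    (hgap : ∀ r, N < r → r < N + p → Q r = 0) (z : K) :
    (C z - X) * ∑ l ∈ range (N + 1), C (eval z (Q l)) * B l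
      = C (T (N + p) N * eval z (Q (N + p))) * B N - C (eval z (Q N)) * B (N + 1) := by
  have hQz := hQ.map (C.comp (evalRingHom z)) (t' := fun r s => C (T r s)) (by simp)
  have := christoffel_darboux_of_gap hQz hB (N := N) hp (fun r h1 h2 => by simp [hgap r h1 h2])
  simpa [mul_assoc] using this

theorem mul_eval_eq_zero_of_isRoot [IsDomain K] {Q B : ℕ → K[X]} {N : ℕ} (hp : 0 < p)
    (hQ : IsTypeISolution p (fun r s => C (T r s)) X Q)
    (hB : IsTypeIISolution p (fun r s => C (T r s)) X B)
    (hgap : ∀ r, N < r → r < N + p → Q r = 0) {z : K} (hz : eval z (B (N + 1)) = 0)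
    (hD : ∑ l ∈ range (N + 1), eval z (Q l) * eval z (B l) ≠ 0) :
    T (N + p) N * eval z (Q (N + p)) = 0 := by
  have hprod : C (T (N + p) N) * Q (N + p) * B N = Q N * B (N + 1) := by
    have := christoffel_darboux_of_gap hQ hB hp hgap
    rw [sub_self, zero_mul] at this
    linear_combination -this
  have hconfluent : ∑ l ∈ range (N + 1), eval z (Q l) * eval z (B l)
      = eval z (Q N) * eval z (derivative (B (N + 1)))
        - T (N + p) N * eval z (Q (N + p)) * eval z (derivative (B N)) := by
    have := congrArg (fun P => eval z (derivative P))
      (christoffel_darboux_eval_left hp hQ hB hgap z)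
    simp only [derivative_mul, derivative_sub, derivative_C, derivative_X, derivative_sum,
      eval_add, eval_sub, eval_mul, eval_C, eval_X, eval_finsetSum, sub_self, zero_mul, zero_add,
      zero_sub, eval_neg, eval_one] at this
    linear_combination -this
  have hBN : eval z (B N) ≠ 0 := by
    -- at a common zero of `B N` and `B (N + 1)`, the derivative of `hprod` is `hconfluent = 0`
    intro hBN
    have := congrArg (fun P => eval z (derivative P)) hprod
    simp only [derivative_mul, derivative_C, eval_add, eval_mul, eval_C, zero_mul, zero_add,
      hBN, hz] at this
    exact hD (by rw [hconfluent]; linear_combination -this)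
  have := congrArg (eval z) hprod
  simp only [eval_mul, eval_C, hz, mul_zero] at this
  exact (mul_eq_zero.mp this).resolve_right hBN

theorem sum_eval_mul_eval_eq_zero [IsDomain K] {Q B : ℕ → K[X]} {N : ℕ} (hp : 0 < p)
    (hQ : IsTypeISolution p (fun r s => C (T r s)) X Q)
    (hB : IsTypeIISolution p (fun r s => C (T r s)) X B)
    (hgap : ∀ r, N < r → r < N + p → Q r = 0) {z w : K} (hzw : z ≠ w)
    (hz : T (N + p) N * eval z (Q (N + p)) = 0) (hw : eval w (B (N + 1)) = 0) :
    ∑ l ∈ range (N + 1), eval z (Q l) * eval w (B l) = 0 := by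
  have := congrArg (eval w) (christoffel_darboux_eval_left hp hQ hB hgap z)
  simp only [eval_mul, eval_sub, eval_C, eval_X, eval_finsetSum, hz, hw, zero_mul, mul_zero,
    sub_zero] at this
  exact (mul_eq_zero.mp this).resolve_left (sub_ne_zero.mpr hzw)

end Polynomials

section TypeIDeterminant

variable {p : ℕ}

theorem exists_Qp_eq_sum_mul [NeZero p] (A : Fin p → ℕ → ℝ[X]) (N : ℕ) :
    ∃ cof : Fin p → ℝ[X], ∀ n, Qp p A n N = ∑ a, A a n * cof a := by
  let M : ℕ → Matrix (Fin p) (Fin p) ℝ[X] := fun n =>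
    Matrix.of fun i a => if (i : ℕ) = 0 then A a n else A a (N + (i : ℕ))
  have hM : ∀ n v, (M n).updateRow 0 v = (M 0).updateRow 0 v := by
    intro n v
    ext i a
    by_cases hi : i = 0
    · simp [hi]
    · simp [hi, M, Fin.val_eq_zero_iff]
  refine ⟨fun a => adjugate (M 0) a 0, fun n => ?_⟩
  change (M n).det = _
  rw [det_eq_sum_mul_adjugate_row _ 0]
  refine sum_congr rfl fun a _ => ?_
  simp only [adjugate_apply, hM n]
  simp [M]

theorem Qp_eq_zero_of_lt (A : Fin p → ℕ → ℝ[X]) {N r : ℕ} (hNr : N < r) (hr : r < N + p) :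
    Qp p A r N = 0 :=
  det_zero_of_row_eq (i := ⟨0, by omega⟩) (j := ⟨r - N, by omega⟩)
    (by simp [Fin.ext_iff]; omega)
    (by ext a; simp [Nat.add_sub_cancel' hNr.le, (Nat.sub_pos_of_lt hNr).ne'])

theorem det_nuMat {A : Fin p → ℕ → ℝ[X]}
    (hAzero : ∀ a : Fin p, ∀ j : ℕ, j < (a : ℕ) → A a j = 0)
    (hAone : ∀ a : Fin p, A a (a : ℕ) = 1) :
    (nuMat p A).det = 1 := by
  rw [det_of_isLowerTriangular _ fun i j hij => by simp [nuMat, hAzero j i hij]]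
  simp [nuMat, hAone]

theorem sum_eval_mul_mu_eq_wfun {A : Fin p → ℕ → ℝ[X]}
    (hAconst : ∀ a : Fin p, ∀ j < p, ∃ c : ℝ, A a j = C c)
    (hAzero : ∀ a : Fin p, ∀ j : ℕ, j < (a : ℕ) → A a j = 0)
    (hAone : ∀ a : Fin p, A a (a : ℕ) = 1) {N : ℕ} {cof : Fin p → ℝ[X]}
    (hcof : ∀ n, Qp p A n N = ∑ a, A a n * cof a) (B : ℕ → ℝ[X])
    (lam : Fin (N + 1) → ℝ) (k : Fin (N + 1)) (m : ℕ) :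
    ∑ a, eval (lam k) (A a m) * mu p A B N lam k a = wfun p A B N lam k m := by
  set D := ∑ l ∈ range (N + 1), eval (lam k) (Qp p A l N) * eval (lam k) (B l)
  have hw : (fun b : Fin p => wfun p A B N lam k b)
      = nuMat p A *ᵥ fun a => eval (lam k) (cof a) / D := by
    ext b
    rw [wfun, hcof b, eval_finsetSum, sum_div]
    refine sum_congr rfl fun a _ => ?_
    obtain ⟨c, hc⟩ := hAconst a b b.isLt
    simp [nuMat, hc, D, mul_div_assoc]
  have hmu : ∀ a, mu p A B N lam k a = eval (lam k) (cof a) / D := by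
    intro a
    change ((nuMat p A)⁻¹ *ᵥ fun b : Fin p => wfun p A B N lam k b) a = _
    rw [hw, mulVec_mulVec, nonsing_inv_mul _ (by rw [det_nuMat hAzero hAone]; exact isUnit_one),
      one_mulVec]
  simp only [hmu, ← mul_div_assoc, ← sum_div]
  simp only [wfun, hcof m, eval_finsetSum, eval_mul, D]

end TypeIDeterminant

theorem sum_wfun_mul_eval_eq_ite {p N : ℕ} {A : Fin p → ℕ → ℝ[X]} {B : ℕ → ℝ[X]}
    {lam : Fin (N + 1) → ℝ}
    (hbiorth : ∀ k j, k ≠ j →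
      ∑ l ∈ range (N + 1), eval (lam k) (Qp p A l N) * eval (lam j) (B l) = 0)
    (hden : ∀ k : Fin (N + 1), ∑ l ∈ range (N + 1),
      eval (lam k) (Qp p A l N) * eval (lam k) (B l) ≠ 0) (l m : Fin (N + 1)) :
    ∑ k, wfun p A B N lam k m * eval (lam k) (B l) = if l = m then 1 else 0 := by
  let U : Matrix (Fin (N + 1)) (Fin (N + 1)) ℝ := of fun k l => wfun p A B N lam k l
  let V : Matrix (Fin (N + 1)) (Fin (N + 1)) ℝ := of fun l k => eval (lam k) (B l)
  have hUV : U * V = 1 := by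
    ext k j
    simp only [U, V, mul_apply, of_apply, wfun, div_mul_eq_mul_div, ← sum_div,
      Fin.sum_univ_eq_sum_range (fun l => eval (lam k) (Qp p A l N) * eval (lam j) (B l))]
    by_cases hkj : k = j
    · rw [hkj, one_apply_eq, div_self (hden j)]
    · rw [one_apply_ne hkj, hbiorth k j hkj, zero_div]
  have hVU : V * U = 1 := mul_eq_one_comm.mp hUV
  simpa [mul_apply, U, V, one_apply, mul_comm] using congrFun (congrFun hVU l) m

theorem stmt_9_general
    (p : ℕ)
    (T : ℕ → ℕ → ℝ)
    (B : ℕ → Polynomial ℝ)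
    (hB0 : B 0 = 1)
    (hBrec : ∀ n, B (n + 1) = (X - C (T n n)) * B n
      - ∑ j ∈ Finset.Icc 1 p, (if j ≤ n then C (T n (n - j)) * B (n - j) else 0))
    (A : Fin p → ℕ → Polynomial ℝ)
    (hAconst : ∀ a : Fin p, ∀ j < p, ∃ c : ℝ, A a j = C c)
    (hAzero : ∀ a : Fin p, ∀ j : ℕ, j < (a : ℕ) → A a j = 0)
    (hAone : ∀ a : Fin p, A a (a : ℕ) = 1)
    (hArec : ∀ a : Fin p, ∀ n : ℕ,
      (if n = 0 then 0 else A a (n - 1))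
        + ∑ i ∈ Finset.range (p + 1), C (T (n + i) n) * A a (n + i) = X * A a n)
    (N : ℕ) (lam : Fin (N + 1) → ℝ)
    (hroots : ∀ k, eval (lam k) (B (N + 1)) = 0)
    (hanti : StrictAnti lam)
    (hden : ∀ k : Fin (N + 1), ∑ l ∈ Finset.range (N + 1),
      eval (lam k) (Qp p A l N) * eval (lam k) (B l) ≠ 0) :
    ∀ m : ℕ, 1 ≤ m → m ≤ N → ∀ n : ℕ, n < m →
      ∑ i : Fin (N + 1),
          (∑ a : Fin p, eval (lam i) (A a m) * mu p A B N lam i a) * (lam i) ^ n = 0 := by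
  intro m _ hmN n hnm
  rcases Nat.eq_zero_or_pos p with rfl | hp
  · simp
  have : NeZero p := ⟨hp.ne'⟩
  obtain ⟨cof, hcof⟩ := exists_Qp_eq_sum_mul A N
  have hQ : IsTypeISolution p (fun r s => C (T r s)) X (fun n => Qp p A n N) := by
    rw [funext fun n => hcof n]
    exact IsTypeISolution.sum_mul (t := fun r s => C (T r s)) (x := X) (q := A) hArec cof
  have hB := isTypeIISolution_of_rec hBrec
  have hgap : ∀ r, N < r → r < N + p → Qp p A r N = 0 := fun r => Qp_eq_zero_of_lt A
  have hbiorth : ∀ k j, k ≠ j →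
      ∑ l ∈ range (N + 1), eval (lam k) (Qp p A l N) * eval (lam j) (B l) = 0 := fun k j hkj =>
    sum_eval_mul_eval_eq_zero hp hQ hB hgap (hanti.injective.ne hkj)
      (mul_eval_eq_zero_of_isRoot hp hQ hB hgap (hroots k) (hden k)) (hroots j)
  simp only [sum_eval_mul_mu_eq_wfun hAconst hAzero hAone hcof]
  refine sum_mul_pow_eq_zero_of_orthogonal hB0 hB _ lam (fun l hl => ?_) hnm
  simpa [Fin.ext_iff, hl.ne] using
    sum_wfun_mul_eval_eq_ite hbiorth hden ⟨l, by omega⟩ ⟨m, by omega⟩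

theorem stmt_9
    (p : ℕ) (hp : 1 ≤ p)
    (T : ℕ → ℕ → ℝ)
    (hT1 : ∀ n, T n (n + 1) = 1)
    (hTsup : ∀ n m, n + 1 < m → T n m = 0)
    (hTsub : ∀ n m, m + p < n → T n m = 0)
    (hTlow : ∀ n, p ≤ n → T n (n - p) ≠ 0)
    (B : ℕ → Polynomial ℝ)
    (hB0 : B 0 = 1)
    (hBrec : ∀ n, B (n + 1) = (X - C (T n n)) * B n
      - ∑ j ∈ Finset.Icc 1 p, (if j ≤ n then C (T n (n - j)) * B (n - j) else 0))
    (A : Fin p → ℕ → Polynomial ℝ)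
    (hAconst : ∀ a : Fin p, ∀ j < p, ∃ c : ℝ, A a j = C c)
    (hAzero : ∀ a : Fin p, ∀ j : ℕ, j < (a : ℕ) → A a j = 0)
    (hAone : ∀ a : Fin p, A a (a : ℕ) = 1)
    (hArec : ∀ a : Fin p, ∀ n : ℕ,
      (if n = 0 then 0 else A a (n - 1))
        + ∑ i ∈ Finset.range (p + 1), C (T (n + i) n) * A a (n + i) = X * A a n)
    (N : ℕ) (lam : Fin (N + 1) → ℝ)
    (hroots : ∀ k, eval (lam k) (B (N + 1)) = 0)
    (hanti : StrictAnti lam)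
    (hsimple : ∀ k, eval (lam k) (derivative (B (N + 1))) ≠ 0)
    (hden : ∀ k : Fin (N + 1), ∑ l ∈ Finset.range (N + 1),
      eval (lam k) (Qp p A l N) * eval (lam k) (B l) ≠ 0) :
    ∀ m : ℕ, 1 ≤ m → m ≤ N → ∀ n : ℕ, n < m →
      ∑ i : Fin (N + 1),
          (∑ a : Fin p, eval (lam i) (A a m) * mu p A B N lam i a) * (lam i) ^ n = 0 :=
  stmt_9_general p T B hB0 hBrec A hAconst hAzero hAone hArec N lam hroots hanti hden
end

section
/- (Darboux transformations) Assume T^{[N]} = L_1^{[N]} L_2^{[N]} ⋯ L_p^{[N]} U^{[N]} is a positive bidiagonal factorization. For k ∈ {1,…,p} define the Darboux transformation T̂^{[N,k]} := L_{k+1}^{[N]} ⋯ L_p^{[N]} U^{[N]} L_1^{[N]} ⋯ L_k^{[N]}. Then: (i) T̂^{[N,k]} is oscillatory; (ii) det(x·I_{N+1} − T̂^{[N,k]}) = B_{N+1}(x), i.e. the characteristic polynomial of T̂^{[N,k]} is B_{N+1}; (iii) if w is a left eigenvector of T^{[N]} with eigenvalue λ, then w·L_1^{[N]}⋯L_k^{[N]}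 is a left eigenvector of T̂^{[N,k]} with eigenvalue λ. -/
open Polynomial

noncomputable def truncM (T : ℕ → ℕ → ℝ) (N : ℕ) : Matrix (Fin (N + 1)) (Fin (N + 1)) ℝ :=
  Matrix.of fun i j : Fin (N + 1) => T (i : ℕ) (j : ℕ)

noncomputable def Lmat (p sz k : ℕ) (α : ℕ → ℝ) : Matrix (Fin sz) (Fin sz) ℝ :=
  Matrix.of fun i j : Fin sz => if (i : ℕ) = (j : ℕ) then 1
    else if (i : ℕ) = (j : ℕ) + 1 then α (k + 1 + (j : ℕ) * (p + 1)) else 0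

noncomputable def Umat (p sz : ℕ) (α : ℕ → ℝ) : Matrix (Fin sz) (Fin sz) ℝ :=
  Matrix.of fun i j : Fin sz => if (j : ℕ) = (i : ℕ) + 1 then 1
    else if (i : ℕ) = (j : ℕ) then α (1 + (i : ℕ) * (p + 1)) else 0

def TotallyNonneg {n : ℕ} (M : Matrix (Fin n) (Fin n) ℝ) : Prop :=
  ∀ (k : ℕ) (r c : Fin k → Fin n), StrictMono r → StrictMono c →
    0 ≤ (M.submatrix r c).det

def TotallyPos {n : ℕ} (M : Matrix (Fin n) (Fin n) ℝ) : Prop :=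
  ∀ (k : ℕ) (r c : Fin k → Fin n), StrictMono r → StrictMono c →
    0 < (M.submatrix r c).det

def Oscillatory {n : ℕ} (M : Matrix (Fin n) (Fin n) ℝ) : Prop :=
  TotallyNonneg M ∧ M.det ≠ 0 ∧ ∃ m : ℕ, 0 < m ∧ TotallyPos (M ^ m)

noncomputable def Darboux (p sz : ℕ) (α : ℕ → ℝ) (k : ℕ) : Matrix (Fin sz) (Fin sz) ℝ :=
  (((List.range' (k + 1) (p - k)).map fun j => Lmat p sz j α).prod) * Umat p sz α *
    (((List.range' 1 k).map fun j => Lmat p sz j α).prod)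

/-!
Cutting the factorization as `T^{[N]} = P Q` with `P = L₁ ⋯ L_k` and `Q = L_{k+1} ⋯ L_p U`, the
Darboux transform is `Q P`. Hence `det (x - Q P) = det (x - P Q)`, and `w P (Q P) = (w P Q) P`.
The characteristic polynomial of `T^{[N]}` is `B_{N+1}` because `x - T^{[N]}` maps
`(B_0, …, B_N)` to `B_{N+1}` times the last unit vector.

For oscillation, every factor is a totally nonnegative bidiagonal matrix with positive band, so by
Cauchy–Binet `Q P` is totally nonnegative and every minor of `Q P` whose row indices trail the
column indices by at most one (through `L₁`), or lead them by at most one (through `U`), is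
positive. Chaining `n` such steps down to the rows `0, …, k - 1` and `n` steps back up reaches
every minor of `(Q P)^{2n}`, which is therefore totally positive.
-/

open Finset Matrix Equiv

section CauchyBinet

variable {R : Type*} [CommRing R] {k n : ℕ}

theorem det_mul_eq_sum_prod_mul_det_submatrix (M : Matrix (Fin k) (Fin n) R)
    (N : Matrix (Fin n) (Fin k) R) :
    (M * N).det = ∑ f : Fin k → Fin n, (∏ i, M i (f i)) * (N.submatrix f id).det := by
  have hrows : M * N = fun i => ∑ l, M i l • N l := by
    ext i j
    simp [Matrix.mul_apply, Finset.sum_apply]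
  have := (detRowAlternating : (Fin k → R) [⋀^Fin k]→ₗ[R] R).toMultilinearMap.map_sum
    (fun i l => M i l • N l)
  simp only [AlternatingMap.coe_multilinearMap, MultilinearMap.map_smul_univ] at this
  rw [hrows]
  exact this

/-- An injective tuple `f` is uniquely `s ∘ σ` with `s` strictly monotone, namely
`s = f ∘ sort f` and `σ = (sort f)⁻¹`. -/
theorem sum_eq_sum_strictMono_comp_perm [DecidablePred (StrictMono : (Fin k → Fin n) → Prop)]
    {h : (Fin k → Fin n) → R} (hh : ∀ f, ¬ Function.Injective f → h f = 0) :
    ∑ f, h f = ∑ s with StrictMono s, ∑ σ : Perm (Fin k), h (s ∘ σ) := by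
  classical
  rw [← Finset.sum_product', ← Finset.sum_subset (subset_univ {f | Function.Injective f})
    (fun f _ hf => hh f (by simpa using hf))]
  symm
  refine Finset.sum_nbij' (fun q => q.1 ∘ q.2) (fun f => (f ∘ Tuple.sort f, (Tuple.sort f)⁻¹))
    ?_ ?_ ?_ ?_ (fun _ _ => rfl)
  · rintro ⟨s, σ⟩ hq
    simp only [mem_product, mem_filter_univ] at hq ⊢
    exact hq.1.injective.comp σ.injective
  · intro f hf
    simp only [mem_product, mem_filter_univ, mem_univ, and_true] at hf ⊢
    exact (Tuple.monotone_sort f).strictMono_of_injective (hf.comp (Tuple.sort f).injective)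
  · rintro ⟨s, σ⟩ hq
    simp only [mem_product, mem_filter_univ] at hq
    have hsort : Tuple.sort (s ∘ σ) = σ⁻¹ := by
      refine (Tuple.eq_sort_iff.mpr ⟨?_, fun i j hij hs => ?_⟩).symm
      · simpa [Function.comp_def] using hq.1.monotone
      · exact absurd (hq.1.injective (by simpa using hs)) hij.ne
    simp [hsort, Function.comp_assoc]
  · intro f _
    simp [Function.comp_assoc]

theorem det_mul_eq_sum_strictMono [DecidablePred (StrictMono : (Fin k → Fin n) → Prop)]
    (M : Matrix (Fin k) (Fin n) R) (N : Matrix (Fin n) (Fin k) R) :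
    (M * N).det = ∑ s with StrictMono s, (M.submatrix id s).det * (N.submatrix s id).det := by
  rw [det_mul_eq_sum_prod_mul_det_submatrix, sum_eq_sum_strictMono_comp_perm]
  · refine sum_congr rfl fun s _ => ?_
    have hperm (σ : Perm (Fin k)) :
        (N.submatrix (s ∘ σ) id).det = Perm.sign σ * (N.submatrix s id).det := by
      rw [← det_permute, submatrix_submatrix]
      rfl
    rw [← det_transpose, det_apply, sum_mul]
    refine sum_congr rfl fun σ _ => ?_
    simp [hperm, Units.smul_def]
    ring
  · intro f hf
    obtain ⟨i, j, hfij, hij⟩ : ∃ i j, f i = f j ∧ i ≠ j := by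
      simpa [Function.Injective] using hf
    rw [det_zero_of_row_eq hij (funext fun l => by simp [hfij]), mul_zero]

theorem det_submatrix_mul [DecidablePred (StrictMono : (Fin k → Fin n) → Prop)]
    (A B : Matrix (Fin n) (Fin n) R) (r c : Fin k → Fin n) :
    ((A * B).submatrix r c).det =
      ∑ s with StrictMono s, (A.submatrix r s).det * (B.submatrix s c).det := by
  rw [submatrix_mul A B r id c Function.bijective_id, det_mul_eq_sum_strictMono]
  simp only [submatrix_submatrix, Function.id_comp, Function.comp_id]

end CauchyBinet

theorem Fin.val_le_val_of_strictMono {k n : ℕ} {r : Fin k → Fin n} (hr : StrictMono r) :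
    ∀ i : Fin k, (i : ℕ) ≤ r i
  | ⟨0, _⟩ => Nat.zero_le _
  | ⟨m + 1, h⟩ => (Fin.val_le_val_of_strictMono hr ⟨m, by omega⟩).trans_lt
      (hr (show (⟨m, by omega⟩ : Fin k) < ⟨m + 1, h⟩ from Nat.lt_succ_self m))

section Bidiagonal

variable {R : Type*} {n : ℕ}

def IsLowerBidiagonal [Zero R] (A : Matrix (Fin n) (Fin n) R) : Prop :=
  ∀ i j, A i j ≠ 0 → (j : ℕ) ≤ i ∧ (i : ℕ) ≤ j + 1

theorem isLowerBidiagonal_one [Zero R] [One R] :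
    IsLowerBidiagonal (1 : Matrix (Fin n) (Fin n) R) := by
  intro i j h
  obtain rfl : i = j := by by_contra hij; simp [one_apply_ne hij] at h
  omega

/-- For a lower bidiagonal matrix only the identity permutation contributes to a minor with
increasing row and column indices: an inversion `a < b`, `σ b < σ a` of `σ` would force
`r (σ a) ≤ c a + 1 ≤ c b ≤ r (σ b) < r (σ a)`. -/
theorem det_submatrix_eq_prod_of_isLowerBidiagonal [CommRing R]
    {A : Matrix (Fin n) (Fin n) R} (hA : IsLowerBidiagonal A) {k : ℕ} {r c : Fin k → Fin n}
    (hr : StrictMono r) (hc : StrictMono c) :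
    (A.submatrix r c).det = ∏ i, A (r i) (c i) := by
  rw [det_apply, sum_eq_single (1 : Perm (Fin k)) (fun σ _ hσ => ?_) (by simp)]
  · simp
  obtain ⟨a, b, hab, hσab⟩ : ∃ a b, a < b ∧ σ b < σ a := by
    refine Tuple.antitone_pair_of_not_sorted fun h => hσ ?_
    rw [Tuple.sort_perm] at h
    exact Equiv.ext fun i => by simpa using congrFun h i
  suffices A (r (σ a)) (c a) = 0 ∨ A (r (σ b)) (c b) = 0 by
    rcases this with h | h <;>
      exact smul_eq_zero_of_right _ (prod_eq_zero (mem_univ _) (by simpa using h))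
  by_contra! h
  have := hA _ _ h.1; have := hA _ _ h.2; have := hr hσab; have := hc hab
  simp only [Fin.lt_def] at *
  omega

end Bidiagonal

section TotalPositivity

variable {n : ℕ} {A B : Matrix (Fin n) (Fin n) ℝ}

theorem TotallyNonneg.mul (hA : TotallyNonneg A) (hB : TotallyNonneg B) :
    TotallyNonneg (A * B) := by
  classical
  intro k r c hr hc
  rw [det_submatrix_mul]
  exact sum_nonneg fun s hs => mul_nonneg (hA k r s hr (mem_filter.1 hs).2)
    (hB k s c (mem_filter.1 hs).2 hc)

theorem TotallyNonneg.transpose (hA : TotallyNonneg A) : TotallyNonneg Aᵀ := by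
  intro k r c hr hc
  simpa [← transpose_submatrix, det_transpose] using hA k c r hc hr

theorem det_submatrix_mul_pos (hA : TotallyNonneg A) (hB : TotallyNonneg B) {k : ℕ}
    {r s c : Fin k → Fin n} (hr : StrictMono r) (hs : StrictMono s) (hc : StrictMono c)
    (hAs : 0 < (A.submatrix r s).det) (hBs : 0 < (B.submatrix s c).det) :
    0 < ((A * B).submatrix r c).det := by
  classical
  rw [det_submatrix_mul]
  refine (mul_pos hAs hBs).trans_le (single_le_sum (f := fun s' =>
    (A.submatrix r s').det * (B.submatrix s' c).det) (fun s' hs' => ?_) (by simpa using hs))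
  exact mul_nonneg (hA k r s' hr (mem_filter.1 hs').2) (hB k s' c (mem_filter.1 hs').2 hc)

def BandMinorsPos (A : Matrix (Fin n) (Fin n) ℝ) (t : ℕ) : Prop :=
  ∀ (k : ℕ) (r c : Fin k → Fin n), StrictMono r → StrictMono c →
    (∀ i, (c i : ℕ) ≤ r i ∧ (r i : ℕ) ≤ c i + t) → 0 < (A.submatrix r c).det

theorem BandMinorsPos.mono {s t : ℕ} (hA : BandMinorsPos A t) (hst : s ≤ t) :
    BandMinorsPos A s :=
  fun k r c hr hc hrc => hA k r c hr hc fun i => ⟨(hrc i).1, (hrc i).2.trans (by omega)⟩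

theorem BandMinorsPos.transpose_zero (hA : BandMinorsPos A 0) : BandMinorsPos Aᵀ 0 := by
  intro k r c hr hc hrc
  obtain rfl : r = c := funext fun i => Fin.ext (by have := hrc i; omega)
  simpa [← transpose_submatrix, det_transpose] using hA k r r hr hr fun i => by simp

theorem BandMinorsPos.det_ne_zero {t : ℕ} (hA : BandMinorsPos A t) : A.det ≠ 0 :=
  (hA n id id strictMono_id strictMono_id fun i => by simp).ne'

/-- A path of `a` steps for `A` followed by `b` steps for `B` passes through the intermediate
row indices `max (c i) (r i - a)`. -/
theorem BandMinorsPos.mul {a b : ℕ} (hA : TotallyNonneg A) (hB : TotallyNonneg B)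
    (hAa : BandMinorsPos A a) (hBb : BandMinorsPos B b) : BandMinorsPos (A * B) (a + b) := by
  intro k r c hr hc hrc
  let s : Fin k → Fin n := fun i =>
    ⟨max (c i) (r i - a), max_lt (c i).2 ((r i).2.trans_le' (by omega))⟩
  have hs : StrictMono s := fun i j hij => by
    have := hr hij; have := hc hij
    simp only [s, Fin.lt_def] at *
    omega
  refine det_submatrix_mul_pos hA hB hr hs hc (hAa k r s hr hs fun i => ?_)
    (hBb k s c hs hc fun i => ?_) <;> (have := hrc i; simp only [s]; omega)

theorem totallyNonneg_of_isLowerBidiagonal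
    (hA : IsLowerBidiagonal A) (hnonneg : ∀ i j, 0 ≤ A i j) :
    TotallyNonneg A := fun _ _ _ hr hc => by
  rw [det_submatrix_eq_prod_of_isLowerBidiagonal hA hr hc]
  exact prod_nonneg fun i _ => hnonneg _ _

theorem bandMinorsPos_of_isLowerBidiagonal {t : ℕ}
    (hA : IsLowerBidiagonal A)
    (hpos : ∀ i j : Fin n, (j : ℕ) ≤ i → (i : ℕ) ≤ j + t → 0 < A i j) :
    BandMinorsPos A t := fun _ _ _ hr hc hrc => by
  rw [det_submatrix_eq_prod_of_isLowerBidiagonal hA hr hc]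
  exact prod_pos fun i _ => hpos _ _ (hrc i).1 (hrc i).2

theorem totallyNonneg_one : TotallyNonneg (1 : Matrix (Fin n) (Fin n) ℝ) :=
  totallyNonneg_of_isLowerBidiagonal isLowerBidiagonal_one fun i j => by
    rw [one_apply]
    split_ifs <;> norm_num

theorem bandMinorsPos_one : BandMinorsPos (1 : Matrix (Fin n) (Fin n) ℝ) 0 :=
  bandMinorsPos_of_isLowerBidiagonal isLowerBidiagonal_one fun i j h h' => by
    rw [show i = j from Fin.ext (by omega), one_apply_eq]
    exact one_pos

theorem TotallyNonneg.pow (hA : TotallyNonneg A) (t : ℕ) : TotallyNonneg (A ^ t) := by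
  induction t with
  | zero => simpa using totallyNonneg_one
  | succ t ih => simpa [pow_succ] using ih.mul hA

theorem BandMinorsPos.pow (hTN : TotallyNonneg A) (hA : BandMinorsPos A 1) (t : ℕ) :
    BandMinorsPos (A ^ t) t := by
  induction t with
  | zero => simpa using bandMinorsPos_one
  | succ t ih => simpa [pow_succ] using ih.mul (hTN.pow t) hTN hA

/-- In `n` steps every row index can be moved down to the bottom indices `0, …, k - 1`, and from
there, with the transpose, up to every column index. -/
theorem totallyPos_pow_of_bandMinorsPos (hTN : TotallyNonneg A) (hA : BandMinorsPos A 1)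
    (hAt : BandMinorsPos Aᵀ 1) : TotallyPos (A ^ (n + n)) := by
  intro k r c hr hc
  have hkn : k ≤ n := Fin.le_of_injective r hr.injective
  let s : Fin k → Fin n := fun i => ⟨i, i.2.trans_le hkn⟩
  have hs : StrictMono s := fun i j hij => hij
  rw [pow_add]
  refine det_submatrix_mul_pos (hTN.pow n) (hTN.pow n) hr hs hc
    (hA.pow hTN n k r s hr hs fun i => ⟨Fin.val_le_val_of_strictMono hr i, by simp [s]; omega⟩) ?_
  have := hAt.pow hTN.transpose n k c s hc hs fun i =>
    ⟨Fin.val_le_val_of_strictMono hc i, by simp [s]; omega⟩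
  rwa [← transpose_pow, ← transpose_submatrix, det_transpose] at this

theorem oscillatory_of_bandMinorsPos (hn : 0 < n) (hTN : TotallyNonneg A)
    (hA : BandMinorsPos A 1) (hAt : BandMinorsPos Aᵀ 1) : Oscillatory A :=
  ⟨hTN, hA.det_ne_zero, n + n, by omega, totallyPos_pow_of_bandMinorsPos hTN hA hAt⟩

theorem oscillatory_mul (hn : 0 < n) (hA : TotallyNonneg A) (hB : TotallyNonneg B)
    (hA₀ : BandMinorsPos A 0) (hAt : BandMinorsPos Aᵀ 1) (hB₁ : BandMinorsPos B 1)
    (hBt : BandMinorsPos Bᵀ 0) : Oscillatory (A * B) := by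
  refine oscillatory_of_bandMinorsPos hn (hA.mul hB) (by simpa using hA₀.mul hA hB hB₁) ?_
  rw [transpose_mul]
  simpa using hBt.mul hB.transpose hA.transpose hAt

theorem totallyNonneg_list_prod_and_bandMinorsPos {l : List (Matrix (Fin n) (Fin n) ℝ)}
    (hl : ∀ L ∈ l, TotallyNonneg L ∧ BandMinorsPos L 1) :
    TotallyNonneg l.prod ∧ BandMinorsPos l.prod 0 := by
  induction l with
  | nil => exact ⟨totallyNonneg_one, bandMinorsPos_one⟩
  | cons L l ih =>
    obtain ⟨hL, hL₁⟩ := hl L List.mem_cons_self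
    obtain ⟨htn, hband⟩ := ih fun M hM => hl M (List.mem_cons_of_mem _ hM)
    exact ⟨hL.mul htn, (hL₁.mul hL htn hband).mono (Nat.zero_le _)⟩

end TotalPositivity

section Factorization

variable {p sz : ℕ} {α : ℕ → ℝ}

theorem isLowerBidiagonal_lmat (k : ℕ) : IsLowerBidiagonal (Lmat p sz k α) := by
  intro i j
  simp only [Lmat, of_apply]
  split_ifs <;> simp <;> omega

theorem isLowerBidiagonal_umat_transpose : IsLowerBidiagonal (Umat p sz α)ᵀ := by
  intro i j
  simp only [transpose_apply, Umat, of_apply]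
  split_ifs <;> simp <;> omega

theorem prod_lmat_range_eq_mul {k : ℕ} (hkp : k ≤ p) :
    ((List.range p).map fun j => Lmat p sz (j + 1) α).prod =
      ((List.range' 1 k).map fun j => Lmat p sz j α).prod *
        ((List.range' (k + 1) (p - k)).map fun j => Lmat p sz j α).prod := by
  rw [← List.prod_append, ← List.map_append, Nat.add_comm k 1, List.range'_append_1,
    Nat.add_sub_cancel' hkp, List.range'_eq_map_range, List.map_map]
  simp only [Function.comp_def, Nat.add_comm 1]

variable (hα : ∀ i, 1 ≤ i → 0 < α i)
include hα

theorem totallyNonneg_lmat (k : ℕ) : TotallyNonneg (Lmat p sz k α) :=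
  totallyNonneg_of_isLowerBidiagonal (isLowerBidiagonal_lmat k) fun i j => by
    simp only [Lmat, of_apply]
    split_ifs
    exacts [zero_le_one, (hα _ (by omega)).le, le_rfl]

theorem bandMinorsPos_lmat (k : ℕ) : BandMinorsPos (Lmat p sz k α) 1 :=
  bandMinorsPos_of_isLowerBidiagonal (isLowerBidiagonal_lmat k) fun i j _ _ => by
    simp only [Lmat, of_apply]
    split_ifs
    exacts [one_pos, hα _ (by omega), by exfalso; omega]

theorem totallyNonneg_umat_transpose : TotallyNonneg (Umat p sz α)ᵀ :=
  totallyNonneg_of_isLowerBidiagonal isLowerBidiagonal_umat_transpose fun i j => by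
    simp only [transpose_apply, Umat, of_apply]
    split_ifs
    exacts [zero_le_one, (hα _ (by omega)).le, le_rfl]

theorem bandMinorsPos_umat_transpose : BandMinorsPos (Umat p sz α)ᵀ 1 :=
  bandMinorsPos_of_isLowerBidiagonal isLowerBidiagonal_umat_transpose fun i j _ _ => by
    simp only [transpose_apply, Umat, of_apply]
    split_ifs
    exacts [one_pos, hα _ (by omega), by exfalso; omega]

theorem totallyNonneg_lmat_prod_and_bandMinorsPos (l : List ℕ) :
    TotallyNonneg (l.map fun j => Lmat p sz j α).prod ∧
      BandMinorsPos (l.map fun j => Lmat p sz j α).prod 0 :=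
  totallyNonneg_list_prod_and_bandMinorsPos fun L hL => by
    obtain ⟨j, -, rfl⟩ := List.mem_map.1 hL
    exact ⟨totallyNonneg_lmat hα j, bandMinorsPos_lmat hα j⟩

theorem bandMinorsPos_lmat_prod_of_ne_nil {l : List ℕ} (hl : l ≠ []) :
    BandMinorsPos (l.map fun j => Lmat p sz j α).prod 1 := by
  obtain ⟨j, l, rfl⟩ := List.exists_cons_of_ne_nil hl
  obtain ⟨htn, hband⟩ := totallyNonneg_lmat_prod_and_bandMinorsPos hα l
  simpa using (bandMinorsPos_lmat hα j).mul (totallyNonneg_lmat hα j) htn hband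

theorem oscillatory_darboux {k : ℕ} (hk : 1 ≤ k) : Oscillatory (Darboux p (sz + 1) α k) := by
  obtain ⟨hHi, hHi₀⟩ := totallyNonneg_lmat_prod_and_bandMinorsPos (p := p) (sz := sz + 1) hα
    (List.range' (k + 1) (p - k))
  obtain ⟨hLo, hLo₀⟩ := totallyNonneg_lmat_prod_and_bandMinorsPos (p := p) (sz := sz + 1) hα
    (List.range' 1 k)
  have hLo₁ := bandMinorsPos_lmat_prod_of_ne_nil (p := p) (sz := sz + 1) hα
    (l := List.range' 1 k) (by simp; omega)
  have hU := (totallyNonneg_umat_transpose (sz := sz + 1) (p := p) hα).transpose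
  have hUt := bandMinorsPos_umat_transpose (sz := sz + 1) (p := p) hα
  refine oscillatory_mul (Nat.succ_pos sz) (hHi.mul hU) hLo
    (by simpa using hHi₀.mul hHi hU (hUt.mono (Nat.zero_le 1)).transpose_zero) ?_ hLo₁
    hLo₀.transpose_zero
  rw [transpose_mul]
  simpa using hUt.mul hU.transpose hHi.transpose hHi₀.transpose_zero

end Factorization

section CharPoly

theorem sum_Icc_ite_eq_sum_range {M : Type*} [AddCommMonoid M] {p n : ℕ} {g : ℕ → M}
    (hg : ∀ j, j + p < n → g j = 0) :
    ∑ j ∈ Icc 1 p, (if j ≤ n then g (n - j) else 0) = ∑ j ∈ range n, g j := by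
  have hle {j : ℕ} (h : (if j ≤ n then g (n - j) else 0) ≠ 0) : j ≤ n := by
    by_contra hj
    exact h (if_neg hj)
  refine sum_bij_ne_zero (fun j _ _ => n - j) (fun j hj h => ?_) (fun a ha h b hb h' hab => ?_)
    (fun j hj hgj => ⟨n - j, ?_, ?_, ?_⟩) (fun j _ h => if_pos (hle h))
  · have := hle h
    simp only [mem_Icc, mem_range] at hj ⊢
    omega
  · have := hle h; have := hle h'
    simp only [mem_Icc] at ha hb
    omega
  · simp only [mem_Icc, mem_range] at hj ⊢
    by_contra h
    exact hgj (hg j (by omega))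
  · simp only [mem_range] at hj
    rwa [if_pos (by omega), Nat.sub_sub_self hj.le]
  · simp only [mem_range] at hj
    omega

variable {p : ℕ} {T : ℕ → ℕ → ℝ} {B : ℕ → ℝ[X]}

theorem eq_X_mul_sub_sum_of_recurrence (hTsub : ∀ n m, m + p < n → T n m = 0)
    (hBrec : ∀ n, B (n + 1) = (X - C (T n n)) * B n
      - ∑ j ∈ Finset.Icc 1 p, (if j ≤ n then C (T n (n - j)) * B (n - j) else 0)) (n : ℕ) :
    B (n + 1) = X * B n - ∑ j ∈ range (n + 1), C (T n j) * B j := by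
  have hsum := sum_Icc_ite_eq_sum_range (p := p) (n := n) (g := fun j => C (T n j) * B j)
    fun j hj => by simp [hTsub n j hj]
  rw [hBrec n, hsum, sum_range_succ]
  ring

theorem charmatrix_truncM_mulVec (hT1 : ∀ n, T n (n + 1) = 1)
    (hTsup : ∀ n m, n + 1 < m → T n m = 0)
    (hB : ∀ n, B (n + 1) = X * B n - ∑ j ∈ range (n + 1), C (T n j) * B j) (N : ℕ) :
    charmatrix (truncM T N) *ᵥ (fun i => B i) = Pi.single (Fin.last N) (B (N + 1)) := by
  funext i
  have hrow : (charmatrix (truncM T N) *ᵥ fun i => B i) i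
      = X * B i - ∑ j ∈ range (N + 1), C (T i j) * B j := by
    simp only [mulVec, dotProduct, charmatrix_apply, sub_mul, sum_sub_distrib, diagonal_apply,
      ite_mul, zero_mul, sum_ite_eq, mem_univ, if_true, truncM, of_apply]
    rw [Fin.sum_univ_eq_sum_range (fun j => C (T i j) * B j)]
  rw [hrow]
  rcases Fin.eq_castSucc_or_eq_last i with ⟨i, rfl⟩ | rfl
  · have hband : ∑ j ∈ range (N + 1), C (T i j) * B j = ∑ j ∈ range (i + 2), C (T i j) * B j :=
      (sum_subset (range_subset_range.2 (by omega)) fun j _ hj => by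
        simp [hTsup i j (by simp at hj; omega)]).symm
    rw [Pi.single_eq_of_ne (Fin.castSucc_ne_last i), Fin.val_castSucc, hband, sum_range_succ,
      hT1, C_1, one_mul, hB i]
    ring
  · rw [Pi.single_eq_same, Fin.val_last, hB N]

/-- Adding `B j` times column `j` to column `0` (note `B 0 = 1`) leaves only `B (N + 1)` in the
bottom row of column `0`; its cofactor is lower triangular with the entries `-T n (n + 1) = -1`
on the diagonal. -/
theorem charpoly_truncM (hT1 : ∀ n, T n (n + 1) = 1) (hTsup : ∀ n m, n + 1 < m → T n m = 0)
    (hB0 : B 0 = 1) (hB : ∀ n, B (n + 1) = X * B n - ∑ j ∈ range (n + 1), C (T n j) * B j)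
    (N : ℕ) : (truncM T N).charpoly = B (N + 1) := by
  set A := charmatrix (truncM T N)
  have hcol := det_updateCol_sum A 0 (fun j => B j)
  have hAB : (fun r => ∑ j : Fin (N + 1), B j • A r j) = Pi.single (Fin.last N) (B (N + 1)) := by
    rw [← charmatrix_truncM_mulVec hT1 hTsup hB N]
    funext r
    simp [A, mulVec, dotProduct, mul_comm]
  rw [hAB, Fin.val_zero, hB0, one_smul] at hcol
  set A' := A.updateCol 0 (Pi.single (Fin.last N) (B (N + 1)))
  have hcofactor : (A'.submatrix Fin.castSucc Fin.succ).det = (-1) ^ N := by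
    have hentry {a b : Fin N} (hab : a ≤ b) : A' a.castSucc b.succ = -C (T a (b + 1)) := by
      have hne : a.castSucc ≠ b.succ := fun h => by
        have := congrArg Fin.val h
        rw [Fin.val_castSucc, Fin.val_succ] at this
        rw [Fin.le_def] at hab
        omega
      simp [A', A, charmatrix_apply_ne _ _ _ hne, truncM]
    rw [det_of_isLowerTriangular _ fun a b (hab : a < b) => by
      rw [submatrix_apply, hentry hab.le, hTsup a (b + 1) (by rw [Fin.lt_def] at hab; omega),
        C_0, neg_zero]]
    simp [hentry le_rfl, hT1]
  rw [charpoly, ← hcol, det_succ_column_zero, sum_eq_single (Fin.last N)]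
  · rw [Fin.succAbove_last, hcofactor, Fin.val_last]
    simp only [A', updateCol_self, Pi.single_eq_same]
    rw [mul_right_comm, ← pow_add, Even.neg_one_pow ⟨N, rfl⟩, one_mul]
  · intro i _ hi
    simp [A', Pi.single_eq_of_ne hi]
  · simp

end CharPoly

theorem stmt_11_general
    (p : ℕ)
    (T : ℕ → ℕ → ℝ)
    (hT1 : ∀ n, T n (n + 1) = 1)
    (hTsup : ∀ n m, n + 1 < m → T n m = 0)
    (hTsub : ∀ n m, m + p < n → T n m = 0)
    (B : ℕ → Polynomial ℝ)
    (hB0 : B 0 = 1)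
    (hBrec : ∀ n, B (n + 1) = (X - C (T n n)) * B n
      - ∑ j ∈ Finset.Icc 1 p, (if j ≤ n then C (T n (n - j)) * B (n - j) else 0))
    (N : ℕ) (α : ℕ → ℝ) (hα : ∀ i, 1 ≤ i → 0 < α i)
    (hfact : truncM T N =
      (((List.range p).map fun k => Lmat p (N + 1) (k + 1) α).prod) * Umat p (N + 1) α) :
    ∀ k : ℕ, 1 ≤ k → k ≤ p →
      Oscillatory (Darboux p (N + 1) α k) ∧
      (Darboux p (N + 1) α k).charpoly = B (N + 1) ∧
      (∀ (w : Fin (N + 1) → ℝ) (lam : ℝ),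
        Matrix.vecMul w (truncM T N) = lam • w →
        Matrix.vecMul
            (Matrix.vecMul w (((List.range' 1 k).map fun j => Lmat p (N + 1) j α).prod))
            (Darboux p (N + 1) α k)
          = lam • Matrix.vecMul w
              (((List.range' 1 k).map fun j => Lmat p (N + 1) j α).prod)) := by
  intro k hk hkp
  have hsplit : truncM T N = ((List.range' 1 k).map fun j => Lmat p (N + 1) j α).prod *
      (((List.range' (k + 1) (p - k)).map fun j => Lmat p (N + 1) j α).prod *
        Umat p (N + 1) α) := by
    rw [hfact, prod_lmat_range_eq_mul hkp, Matrix.mul_assoc]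
  refine ⟨oscillatory_darboux hα hk, ?_, fun w lam hw => ?_⟩
  · rw [Darboux, charpoly_mul_comm, ← hsplit,
      charpoly_truncM hT1 hTsup hB0 (eq_X_mul_sub_sum_of_recurrence hTsub hBrec)]
  · rw [Darboux, vecMul_vecMul, ← Matrix.mul_assoc, ← hsplit, ← vecMul_vecMul, hw, smul_vecMul]

theorem stmt_11
    (p : ℕ) (hp : 1 ≤ p)
    (T : ℕ → ℕ → ℝ)
    (hT1 : ∀ n, T n (n + 1) = 1)
    (hTsup : ∀ n m, n + 1 < m → T n m = 0)
    (hTsub : ∀ n m, m + p < n → T n m = 0)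
    (hTlow : ∀ n, p ≤ n → T n (n - p) ≠ 0)
    (B : ℕ → Polynomial ℝ)
    (hB0 : B 0 = 1)
    (hBrec : ∀ n, B (n + 1) = (X - C (T n n)) * B n
      - ∑ j ∈ Finset.Icc 1 p, (if j ≤ n then C (T n (n - j)) * B (n - j) else 0))
    (N : ℕ) (α : ℕ → ℝ) (hα : ∀ i, 1 ≤ i → 0 < α i)
    (hfact : truncM T N =
      (((List.range p).map fun k => Lmat p (N + 1) (k + 1) α).prod) * Umat p (N + 1) α) :
    ∀ k : ℕ, 1 ≤ k → k ≤ p →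
      Oscillatory (Darboux p (N + 1) α k) ∧
      (Darboux p (N + 1) α k).charpoly = B (N + 1) ∧
      (∀ (w : Fin (N + 1) → ℝ) (lam : ℝ),
        Matrix.vecMul w (truncM T N) = lam • w →
        Matrix.vecMul
            (Matrix.vecMul w (((List.range' 1 k).map fun j => Lmat p (N + 1) j α).prod))
            (Darboux p (N + 1) α k)
          = lam • Matrix.vecMul w
              (((List.range' 1 k).map fun j => Lmat p (N + 1) j α).prod)) :=
  stmt_11_general p T hT1 hTsup hTsub B hB0 hBrec N α hα hfact
end
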